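/- arXiv:math/0009132 — 2 statements merged into one kernel-verified Lean document; each statement's English description precedes it below -/
import Mathlib

section
/- (Structure-constant recursion in the proof of Lemma 3.7) Define rational numbers a(k; n_0, …, n_k) for k ≥ 0 and integers n_0, …, n_k by a(0; n_0) = 1 and the recursion a(k+1; n_0, …, n_{k+1}) = −Σ_{i=1}^{k+1} [ a(k; n_0, …, n_{i−1}, n_{i+1}, …, n_{k+1}) · (Σ_{ℓ=0}^{k+1} n_ℓ − n_i) · n_i − Σ_{j=i+1}^{k+1} n_i·n_j · a(k; n_0, …, n_{i−1}, n_{i+1}, …, n_{j−1}, n_i+n_j, n_{j+1}, …, n_{k+1}) ]. Then for all k ≥ 0 and all integers n_0, …, n_k one has a(k; n_0, …, n_k) = (−1)^k · k! · n_0^k · n_1⋯n_k. -/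
/-
Induction on `k`.  Write `c = (-1)^k k! n₀^k` and `P = n₁⋯n_{k+1}`.  By the induction hypothesis
both kinds of terms in the recursion are multiples of `c P`: removing `nᵢ` and multiplying by `nᵢ`
gives `c P`, while merging `nᵢ, n_j` into `nᵢ + n_j` and multiplying by `nᵢ n_j` gives
`c P (nᵢ + n_j)`.  What remains is the scalar identity
`Σ_{i=1}^{k+1} (Σ_ℓ n_ℓ - nᵢ - Σ_{j>i} (nᵢ + n_j)) = (k+1) n₀`,
since every `n_l` with `l ≥ 1` is counted `k+1` times positively and `k+1` times negatively.
-/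

open scoped BigOperators

/-- Remove the entry at index `i` from the tuple `n` (entries after `i` shift down). -/
def removeAt' (i : ℕ) (n : ℕ → ℤ) : ℕ → ℤ := fun t => if t < i then n t else n (t + 1)

/-- Replace the entry at index `j` of the tuple `n` by `v`. -/
def updateAt' (j : ℕ) (v : ℤ) (n : ℕ → ℤ) : ℕ → ℤ := fun t => if t = j then v else n t

/-- The structure constants `a(k; n₀, …, n_k)` of the proof of Lemma 3.7:
`a(0; n₀) = 1` and
`a(k+1; n₀, …, n_{k+1}) = -Σ_{i=1}^{k+1} [ a(k; n₀,…,n̂ᵢ,…,n_{k+1})·(Σ_ℓ n_ℓ - nᵢ)·nᵢ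
  - Σ_{j=i+1}^{k+1} nᵢ·n_j · a(k; n₀,…,n̂ᵢ,…,n_{j-1}, nᵢ+n_j, n_{j+1},…,n_{k+1}) ]`. -/
def aConst : ℕ → (ℕ → ℤ) → ℚ
  | 0, _ => 1
  | k + 1, n =>
      -∑ i ∈ Finset.Icc 1 (k + 1),
        (aConst k (removeAt' i n) * (((∑ l ∈ Finset.range (k + 2), n l) - n i : ℤ) : ℚ)
            * (n i : ℚ)
          - ∑ j ∈ Finset.Icc (i + 1) (k + 1),
              (n i : ℚ) * (n j : ℚ) * aConst k (updateAt' (j - 1) (n i + n j) (removeAt' i n)))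

open Finset

lemma removeAt'_of_lt {i t : ℕ} (n : ℕ → ℤ) (h : t < i) : removeAt' i n t = n t := if_pos h

lemma removeAt'_of_le {i t : ℕ} (n : ℕ → ℤ) (h : i ≤ t) : removeAt' i n t = n (t + 1) :=
  if_neg (Nat.not_lt.mpr h)

lemma image_Icc_succAbove {i k : ℕ} (hi : 1 ≤ i) (hik : i ≤ k + 1) :
    (Icc 1 k).image (fun t => if t < i then t else t + 1) = (Icc 1 (k + 1)).erase i := by
  ext m
  simp only [mem_image, mem_erase, mem_Icc]
  constructor
  · rintro ⟨t, ht, rfl⟩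
    split_ifs <;> omega
  · rintro ⟨hmi, hm⟩
    refine ⟨if m < i then m else m - 1, ?_, ?_⟩ <;> split_ifs <;> omega

lemma mul_prod_removeAt' (n : ℕ → ℤ) {i k : ℕ} (hi : 1 ≤ i) (hik : i ≤ k + 1) :
    n i * ∏ t ∈ Icc 1 k, removeAt' i n t = ∏ t ∈ Icc 1 (k + 1), n t := by
  have hinj : Set.InjOn (fun t => if t < i then t else t + 1) (Icc 1 k) := by
    intro a _ b _ h
    simp only at h
    split_ifs at h <;> omega
  rw [← mul_prod_erase _ _ (mem_Icc.mpr ⟨hi, hik⟩), ← image_Icc_succAbove hi hik,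
    prod_image hinj]
  refine congrArg _ (prod_congr rfl fun t _ => ?_)
  unfold removeAt'
  split_ifs <;> rfl

lemma updateAt'_eq_update (j : ℕ) (v : ℤ) (n : ℕ → ℤ) :
    updateAt' j v n = Function.update n j v := by
  funext t
  simp [updateAt', Function.update_apply]

lemma mul_prod_updateAt' {s : Finset ℕ} {j : ℕ} (hj : j ∈ s) (v : ℤ) (n : ℕ → ℤ) :
    n j * ∏ t ∈ s, updateAt' j v n t = v * ∏ t ∈ s, n t := by
  rw [updateAt'_eq_update, prod_update_of_mem hj, ← mul_prod_erase _ _ hj, sdiff_singleton_eq_erase]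
  ring

lemma mul_mul_prod_merge (n : ℕ → ℤ) {i j k : ℕ} (hi : 1 ≤ i) (hij : i < j) (hjk : j ≤ k + 1) :
    n i * n j * ∏ t ∈ Icc 1 k, updateAt' (j - 1) (n i + n j) (removeAt' i n) t
      = (n i + n j) * ∏ t ∈ Icc 1 (k + 1), n t := by
  have hnj : removeAt' i n (j - 1) = n j := by
    rw [removeAt'_of_le n (by omega), Nat.sub_add_cancel (by omega)]
  have hmerged := mul_prod_updateAt' (mem_Icc.mpr ⟨by omega, by omega⟩ : j - 1 ∈ Icc 1 k)
    (n i + n j) (removeAt' i n)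
  rw [hnj] at hmerged
  rw [mul_assoc, hmerged, ← mul_prod_removeAt' n hi (by omega)]
  ring

lemma sum_pairs_Icc_add_sum_Icc {R : Type*} [CommSemiring R] (g : ℕ → R) (m : ℕ) :
    ∑ i ∈ Icc 1 m, ∑ j ∈ Icc (i + 1) m, (g i + g j) + ∑ i ∈ Icc 1 m, g i
      = m * ∑ i ∈ Icc 1 m, g i := by
  induction m with
  | zero => simp
  | succ m ih =>
    have hsplit : ∀ i ∈ Icc 1 m, ∑ j ∈ Icc (i + 1) (m + 1), (g i + g j)
        = ∑ j ∈ Icc (i + 1) m, (g i + g j) + (g i + g (m + 1)) := fun i hi =>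
      sum_Icc_succ_top (by simp at hi; omega) _
    rw [sum_Icc_succ_top (by omega : 1 ≤ m + 1), sum_congr rfl hsplit,
      Icc_eq_empty (by omega : ¬ m + 1 + 1 ≤ m + 1), sum_empty,
      sum_Icc_succ_top (by omega : 1 ≤ m + 1) g, sum_add_distrib, sum_add_distrib, sum_const,
      Nat.card_Icc, nsmul_eq_mul]
    push_cast
    calc _ = (∑ i ∈ Icc 1 m, ∑ j ∈ Icc (i + 1) m, (g i + g j) + ∑ i ∈ Icc 1 m, g i)
          + ∑ i ∈ Icc 1 m, g i + (m + 1) * g (m + 1) := by ring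
      _ = _ := by rw [ih]; ring

lemma sum_range_eq_add_sum_Icc {M : Type*} [AddCommMonoid M] (g : ℕ → M) (m : ℕ) :
    ∑ l ∈ range (m + 1), g l = g 0 + ∑ l ∈ Icc 1 m, g l := by
  rw [range_eq_Ico, sum_eq_sum_Ico_succ_bot (Nat.succ_pos m)]
  rfl

lemma sum_Icc_sum_range_sub_sub_sum_pairs {R : Type*} [CommRing R] (g : ℕ → R) (k : ℕ) :
    ∑ i ∈ Icc 1 (k + 1),
        (∑ l ∈ range (k + 2), g l - g i - ∑ j ∈ Icc (i + 1) (k + 1), (g i + g j))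
      = (k + 1) * g 0 := by
  have hpairs := sum_pairs_Icc_add_sum_Icc g (k + 1)
  rw [sum_sub_distrib, sum_sub_distrib, sum_const, Nat.card_Icc, nsmul_eq_mul,
    sum_range_eq_add_sum_Icc]
  push_cast at hpairs ⊢
  linear_combination -hpairs

section InductionStep

variable {k : ℕ}
  (ih : ∀ m : ℕ → ℤ,
    aConst k m = (-1 : ℚ) ^ k * (Nat.factorial k : ℚ) * (m 0 : ℚ) ^ k * ∏ t ∈ Icc 1 k, (m t : ℚ))
include ih

lemma cast_mul_aConst_removeAt' (n : ℕ → ℤ) {i : ℕ} (hi : 1 ≤ i) (hik : i ≤ k + 1) :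
    (n i : ℚ) * aConst k (removeAt' i n)
      = (-1) ^ k * (Nat.factorial k : ℚ) * (n 0 : ℚ) ^ k * ∏ t ∈ Icc 1 (k + 1), (n t : ℚ) := by
  rw [ih, removeAt'_of_lt n (by omega : 0 < i)]
  have := congrArg (Int.cast : ℤ → ℚ) (mul_prod_removeAt' n hi hik)
  push_cast at this
  linear_combination (-1) ^ k * (Nat.factorial k : ℚ) * (n 0 : ℚ) ^ k * this

lemma cast_mul_mul_aConst_merge (n : ℕ → ℤ) {i j : ℕ} (hi : 1 ≤ i) (hij : i < j)
    (hjk : j ≤ k + 1) :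
    (n i : ℚ) * n j * aConst k (updateAt' (j - 1) (n i + n j) (removeAt' i n))
      = (-1) ^ k * (Nat.factorial k : ℚ) * (n 0 : ℚ) ^ k * (∏ t ∈ Icc 1 (k + 1), (n t : ℚ))
        * (n i + n j) := by
  have h0 : updateAt' (j - 1) (n i + n j) (removeAt' i n) 0 = n 0 := by
    rw [updateAt'_eq_update, Function.update_of_ne (by omega), removeAt'_of_lt n (by omega)]
  rw [ih, h0]
  have := congrArg (Int.cast : ℤ → ℚ) (mul_mul_prod_merge n hi hij hjk)
  push_cast at this
  linear_combination (-1) ^ k * (Nat.factorial k : ℚ) * (n 0 : ℚ) ^ k * this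

lemma aConst_succ_summand_eq (n : ℕ → ℤ) {i : ℕ} (hi : 1 ≤ i) (hik : i ≤ k + 1) :
    aConst k (removeAt' i n) * (((∑ l ∈ range (k + 2), n l) - n i : ℤ) : ℚ) * (n i : ℚ)
        - ∑ j ∈ Icc (i + 1) (k + 1),
            (n i : ℚ) * (n j : ℚ) * aConst k (updateAt' (j - 1) (n i + n j) (removeAt' i n))
      = (-1) ^ k * (Nat.factorial k : ℚ) * (n 0 : ℚ) ^ k * (∏ t ∈ Icc 1 (k + 1), (n t : ℚ))
        * (∑ l ∈ range (k + 2), (n l : ℚ) - n i - ∑ j ∈ Icc (i + 1) (k + 1), ((n i : ℚ) + n j)) := by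
  have hmerge : ∀ j ∈ Icc (i + 1) (k + 1),
      (n i : ℚ) * n j * aConst k (updateAt' (j - 1) (n i + n j) (removeAt' i n))
        = (-1) ^ k * (Nat.factorial k : ℚ) * (n 0 : ℚ) ^ k * (∏ t ∈ Icc 1 (k + 1), (n t : ℚ))
          * (n i + n j) := fun j hj =>
    cast_mul_mul_aConst_merge ih n hi (by simp at hj; omega) (mem_Icc.mp hj).2
  rw [sum_congr rfl hmerge, ← mul_sum]
  push_cast
  linear_combination (∑ l ∈ range (k + 2), (n l : ℚ) - n i) * cast_mul_aConst_removeAt' ih n hi hik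

end InductionStep

/-- **The structure-constant recursion in the proof of Lemma 3.7:**
`a(k; n₀, …, n_k) = (-1)^k · k! · n₀^k · n₁⋯n_k`. -/
theorem structure_constant_recursion (k : ℕ) (n : ℕ → ℤ) :
    aConst k n
      = (-1 : ℚ) ^ k * (Nat.factorial k : ℚ) * (n 0 : ℚ) ^ k *
          ∏ i ∈ Finset.Icc 1 k, (n i : ℚ) := by
  induction k generalizing n with
  | zero => simp [aConst]
  | succ k ih =>
    have hsummand := fun i (hi : i ∈ Icc 1 (k + 1)) =>
      aConst_succ_summand_eq ih n (mem_Icc.mp hi).1 (mem_Icc.mp hi).2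
    rw [aConst, sum_congr rfl hsummand, ← mul_sum, sum_Icc_sum_range_sub_sub_sum_pairs,
      Nat.factorial_succ]
    push_cast
    ring
end

section
/- (Lemma 5.26) Fix integers 1 ≤ a ≤ b, let g ∈ End(H) be homogeneous of bidegree (ℓ, s), let m_1, …, m_b ∈ ℤ, let β_1, …, β_b ∈ A be homogeneous, and let w ∈ H (in the paper w is the vacuum vector spanning H^{0,0}; the identity is formal and holds for any w). For 0 ≤ i ≤ a let σ_i range over strictly increasing maps {1,…,i} → {1,…,b}; set σ_i^0 = {1,…,b} minus the image of σ_i, σ_a^1 = { ℓ : 1 ≤ ℓ < σ_a(a), ℓ not in the image of σ_a }, σ_a^2 = { ℓ : σ_a(a) < ℓ ≤ b }, and σ_a(0) := 0; all products over index sets are taken in increasing order of the index. Then there exist signs ε(σ_i) ∈ {+1, −1} (depending only on s, the degrees |β_j|, and σ_i) such that g( q_{m_1}(β_1)⋯q_{m_b}(β_b) w ) equals Σ_{i=0}^{a−1} Σ_{σ_i} ε(σ_i) · ( ∏_{ℓ ∈ σ_i^0} q_{m_ℓ}(β_ℓ) ) [⋯[[g, q_{m_{σ_i(1)}}(β_{σ_i(1)})],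 q_{m_{σ_i(2)}}(β_{σ_i(2)})], …, q_{m_{σ_i(i)}}(β_{σ_i(i)})] w plus Σ_{σ_a} (−1)^{Σ_{k=0}^{a−1} ( s + Σ_{ℓ=1}^{k} |β_{σ_a(ℓ)}| ) · Σ_{σ_a(k) < j < σ_a(k+1)} |β_j| } · ( ∏_{ℓ ∈ σ_a^1} q_{m_ℓ}(β_ℓ) ) [⋯[[g, q_{m_{σ_a(1)}}(β_{σ_a(1)})], q_{m_{σ_a(2)}}(β_{σ_a(2)})], …, q_{m_{σ_a(a)}}(β_{σ_a(a)})] ( ∏_{ℓ ∈ σ_a^2} q_{m_ℓ}(β_ℓ) ) w, where all brackets are left-nested iterated supercommutators. -/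
open scoped BigOperators Classical

/-- `(-1)^z` as a rational number (the Koszul sign attached to a parity `z`). -/
def ssgn (z : ℤ) : ℚ := (-1 : ℚ) ^ z

/-- The supercommutator `[f, g] = f ∘ g - ε • g ∘ f` with explicit Koszul sign `ε`
(for homogeneous operators of parities `m`, `m₁` one takes `ε = (-1)^(m·m₁)`). -/
def sbr {H : Type} [AddCommGroup H] [Module ℚ H] (ε : ℚ) (f g : Module.End ℚ H) :
    Module.End ℚ H :=
  f * g - ε • (g * f)

/-- The iterated derivative `f⁽ᵏ⁾ = [d, f⁽ᵏ⁻¹⁾]`, `f⁽⁰⁾ = f`; since `d` is even, the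
supercommutator with `d` is the ordinary commutator. -/
def derivIter {H : Type} [AddCommGroup H] [Module ℚ H] (d : Module.End ℚ H) :
    ℕ → Module.End ℚ H → Module.End ℚ H
  | 0, f => f
  | k + 1, f => d * derivIter d k f - derivIter d k f * d

/-- The left-nested iterated supercommutator
`[⋯[[f, q_{n₁}(a₁)], q_{n₂}(a₂)], …, q_{n_r}(a_r)]`.
Here `p` is the cohomological parity of `f` and each list entry is `(nⱼ, aⱼ, |aⱼ|)`;
the operator `q_n(a)` has parity `|a|` (its second bidegree component `2n-2+|a|` is
congruent to `|a|` mod 2), so the bracket with the `j`-th factor carries the Koszul sign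
`(-1)^((p + |a₁| + ⋯ + |a_{j-1}|)·|a_j|)`. -/
def nestedL {A H : Type} [Ring A] [Algebra ℚ A] [AddCommGroup H] [Module ℚ H]
    (q : ℤ → A →ₗ[ℚ] Module.End ℚ H) :
    ℤ → Module.End ℚ H → List (ℤ × A × ℕ) → Module.End ℚ H
  | _, f, [] => f
  | p, f, (n, a, da) :: rest =>
      nestedL q (p + (da : ℤ)) (sbr (ssgn (p * (da : ℤ))) f (q n a)) rest

/-- The algebraic setup modeling the cohomology `A = H*(X)` of a smooth projective
surface `X` (a graded-commutative unital `ℚ`-algebra), the integration functional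
`T = ∫_X`, the canonical class `K = K_X ∈ A²`, the bigraded space
`H = ⊕_{n,i≥0} Hⁿ'ⁱ` modeling `⊕_n H*(X^[n])`, Nakajima's Heisenberg operators
`q_n : A → End(H)` with `q_0 = 0`, Lehn's boundary operator `d` of bidegree `(0,2)`,
and the commutation relations of Theorem 2.16 (i) and (v). -/
structure HilbSetup : Type 1 where
  A : Type
  [ringA : Ring A]
  [algA : Algebra ℚ A]
  /-- the degree-`s` part `A^s` of `A` -/
  degA : ℕ → Submodule ℚ A
  one_mem : (1 : A) ∈ degA 0
  /-- graded commutativity `ab = (-1)^(|a||b|) ba` -/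
  gcomm : ∀ (da db : ℕ) (a b : A), a ∈ degA da → b ∈ degA db →
    a * b = ssgn ((da : ℤ) * (db : ℤ)) • (b * a)
  T : A →ₗ[ℚ] ℚ
  K : A
  K_mem : K ∈ degA 2
  H : Type
  [acgH : AddCommGroup H]
  [modH : Module ℚ H]
  /-- the component `H^{n,i}` of `H` (trivial for negative indices) -/
  comp : ℤ → ℤ → Submodule ℚ H
  comp_vanish : ∀ n i : ℤ, n < 0 ∨ i < 0 → comp n i = ⊥
  q : ℤ → A →ₗ[ℚ] Module.End ℚ H
  d : Module.End ℚ H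
  q_zero : q 0 = 0
  /-- `q_n(a)` is homogeneous of bidegree `(n, 2n-2+|a|)` -/
  q_homog : ∀ (n : ℤ) (da : ℕ) (a : A), a ∈ degA da →
    ∀ (N i : ℤ) (x : H), x ∈ comp N i → q n a x ∈ comp (N + n) (i + (2 * n - 2 + (da : ℤ)))
  /-- `d` is homogeneous of bidegree `(0, 2)` -/
  d_homog : ∀ (N i : ℤ) (x : H), x ∈ comp N i → d x ∈ comp N (i + 2)
  /-- `[q_n(a), q_m(b)] = n · δ_{n+m,0} · T(ab) · id` -/
  comm_qq : ∀ (n m : ℤ) (da db : ℕ) (a b : A), a ∈ degA da → b ∈ degA db →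
    sbr (ssgn ((da : ℤ) * (db : ℤ))) (q n a) (q m b)
      = (if n + m = 0 then (n : ℚ) * T (a * b) else 0) • (1 : Module.End ℚ H)
  /-- `[q_n′(a), q_m(b)] = -nm·( q_{n+m}(ab) + ((|n|-1)/2)·δ_{n+m,0}·T(K·a·b)·id )` -/
  comm_dqq : ∀ (n m : ℤ) (da db : ℕ) (a b : A), a ∈ degA da → b ∈ degA db →
    sbr (ssgn ((da : ℤ) * (db : ℤ))) (d * q n a - q n a * d) (q m b)
      = (-((n : ℚ) * (m : ℚ))) • (q (n + m) (a * b)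
          + ((((n.natAbs : ℚ) - 1) / 2 * (if n + m = 0 then T (K * a * b) else 0))
              • (1 : Module.End ℚ H)))

attribute [instance] HilbSetup.ringA HilbSetup.algA HilbSetup.acgH HilbSetup.modH

/-- Extend a strictly increasing map `σ : Fin i → Fin b` to `ℕ → ℕ` by the value `b`
outside `[0, i)`. -/
def extFin {i b : ℕ} (σ : Fin i → Fin b) : ℕ → ℕ :=
  fun t => if h : t < i then (σ ⟨t, h⟩ : ℕ) else b


namespace L526

lemma ssgn_add (x y : ℤ) : ssgn (x + y) = ssgn x * ssgn y := by
  simpa [ssgn] using zpow_add₀ (by norm_num : (-1 : ℚ) ≠ 0) x y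

lemma ssgn_zero : ssgn 0 = 1 := by simp [ssgn]

lemma ssgn_pm (z : ℤ) : ssgn z = 1 ∨ ssgn z = -1 := by
  rcases Int.even_or_odd z with ⟨k, hk⟩ | ⟨k, hk⟩
  · left
    have : z = 2 * k := by omega
    rw [this, ssgn]
    rw [zpow_mul]
    norm_num
  · right
    have : z = 2 * k + 1 := by omega
    rw [this, ssgn, zpow_add₀ (by norm_num : (-1:ℚ) ≠ 0), zpow_mul]
    norm_num

/-- sum of degrees in a nestedL list -/
def sumd {A : Type} (L : List (ℤ × A × ℕ)) : ℤ := (L.map fun y => ((y.2.2 : ℤ))).sum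

lemma nestedL_snoc {A H : Type} [Ring A] [Algebra ℚ A] [AddCommGroup H] [Module ℚ H]
    (q : ℤ → A →ₗ[ℚ] Module.End ℚ H) (L : List (ℤ × A × ℕ)) :
    ∀ (p : ℤ) (f : Module.End ℚ H) (x : ℤ × A × ℕ),
      nestedL q p f (L ++ [x])
        = sbr (ssgn ((p + sumd L) * (x.2.2 : ℤ))) (nestedL q p f L) (q x.1 x.2.1) := by
  induction L with
  | nil => intro p f x; simp [nestedL, sumd]
  | cons y L ih =>
      intro p f x
      obtain ⟨n, a, da⟩ := y
      show nestedL q (p + (da : ℤ)) _ (L ++ [x]) = _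
      rw [ih]
      have h : p + (da : ℤ) + sumd L = p + sumd ((n, a, da) :: L) := by
        simp [sumd]; ring
      rw [show nestedL q p f ((n, a, da) :: L)
            = nestedL q (p + (da : ℤ)) (sbr (ssgn (p * (da : ℤ))) f (q n a)) L from rfl, ← h]

lemma listsum_eq {M : Type} [AddCommMonoid M] (f : ℕ → M) (k : ℕ) :
    ((List.range k).map f).sum = ∑ t ∈ Finset.range k, f t := by
  induction k with
  | zero => simp
  | succ k ih => rw [List.range_succ, Finset.sum_range_succ]; simp [ih]

lemma filter_range_nil {b : ℕ} (P : ℕ → Bool) (hbc : ∀ x, x < b → P x = false) :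
    (List.range b).filter P = [] := by
  rw [List.filter_eq_nil_iff]
  intro x hx
  simp only [List.mem_range] at hx
  simp [hbc x hx]

lemma filter_range_cons {b c : ℕ} (P : ℕ → Bool) (hc : c < b) (hPc : P c = true)
    (hlt : ∀ x, x < c → P x = false) :
    (List.range b).filter P = c :: (List.range b).filter (fun x => P x && decide (c < x)) := by
  induction b with
  | zero => omega
  | succ b ih =>
      rw [List.range_succ, List.filter_append, List.filter_append]
      rcases Nat.lt_or_ge c b with h | h
      · rw [ih h]
        simp only [List.cons_append]
        congr 1
        congr 1
        simp only [List.filter_cons, List.filter_nil]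
        have : (c < b) = True := by simp [h]
        by_cases hb : P b = true
        · simp [hb, h]
        · simp at hb; simp [hb]
      · have hcb : c = b := by omega
        subst hcb
        have h1 : (List.range c).filter P = [] := filter_range_nil P (fun x hx => hlt x hx)
        have h2 : (List.range c).filter (fun x => P x && decide (c < x)) = [] := by
          apply filter_range_nil
          intro x hx
          simp [Nat.not_lt.mpr (le_of_lt hx)]
        rw [h1, h2]
        simp [hPc]

lemma filter_range_split (b c : ℕ) (P : ℕ → Bool) :
    (List.range b).filter P
      = (List.range b).filter (fun x => P x && decide (x < c))
        ++ (List.range b).filter (fun x => P x && decide (c ≤ x)) := by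
  induction b with
  | zero => simp
  | succ b ih =>
      rw [List.range_succ, List.filter_append, List.filter_append, List.filter_append, ih]
      rcases Nat.lt_or_ge b c with h | h
      · have h2 : (List.range b).filter (fun x => P x && decide (c ≤ x)) = [] := by
          apply filter_range_nil
          intro x hx; simp; intro _; omega
        have h3 : [b].filter (fun x => P x && decide (c ≤ x)) = [] := by
          simp only [List.filter_cons, List.filter_nil]
          have : ¬ (c ≤ b) := by omega
          simp [this]
        rw [h2, h3]
        simp only [List.append_nil, List.append_assoc]
        congr 1
        simp only [List.filter_cons, List.filter_nil]
        by_cases hb : P b = true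
        · simp [hb, h]
        · simp at hb; simp [hb]
      · have h3 : [b].filter (fun x => P x && decide (x < c)) = [] := by
          simp only [List.filter_cons, List.filter_nil]
          have : ¬ (b < c) := by omega
          simp [this]
        rw [h3]
        simp only [List.append_nil, List.append_assoc]
        congr 2
        simp only [List.filter_cons, List.filter_nil]
        by_cases hb : P b = true
        · simp [hb, h]
        · simp at hb; simp [hb]


lemma sum_if_head {M : Type} [AddCommMonoid M] {b c : ℕ} (hc : c < b)
    (Pu : ℕ → Prop) [DecidablePred Pu] (f : ℕ → M) (hPc : Pu c) :
    ∑ j ∈ Finset.range b, (if c ≤ j ∧ Pu j then f j else 0)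
      = f c + ∑ j ∈ Finset.range b, (if c + 1 ≤ j ∧ Pu j then f j else 0) := by
  have key : ∀ j ∈ Finset.range b,
      (if c ≤ j ∧ Pu j then f j else 0)
        = (if j = c then f c else 0) + (if c + 1 ≤ j ∧ Pu j then f j else 0) := by
    intro j _
    by_cases hj : j = c
    · have h1 : c ≤ j ∧ Pu j := ⟨by omega, by rw [hj]; exact hPc⟩
      have h2 : ¬ (c + 1 ≤ j ∧ Pu j) := by rintro ⟨h', -⟩; omega
      rw [if_pos h1, if_pos hj, if_neg h2, add_zero, hj]
    · rename_i hne0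
      have hne : j ≠ c := hj
      rcases Nat.lt_or_ge j c with h | h
      · have h1 : ¬ (c ≤ j ∧ Pu j) := by rintro ⟨h', -⟩; omega
        have h2 : ¬ (c + 1 ≤ j ∧ Pu j) := by rintro ⟨h', -⟩; omega
        rw [if_neg h1, if_neg h2, if_neg hne, add_zero]
      · have h : c + 1 ≤ j := by omega
        have e1 : (c ≤ j ∧ Pu j) ↔ (c + 1 ≤ j ∧ Pu j) := by constructor <;> (rintro ⟨-, h'⟩; exact ⟨by omega, h'⟩)
        simp only [if_neg hne, zero_add]
        exact if_congr e1 rfl rfl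
  rw [Finset.sum_congr rfl key, Finset.sum_add_distrib]
  congr 1
  rw [Finset.sum_ite_eq' (Finset.range b) c (fun _ => f c)]
  simp [hc]

lemma sum_if_head' {M : Type} [AddCommMonoid M] {b c : ℕ} (hc : c < b) (f : ℕ → M) :
    ∑ j ∈ Finset.range b, (if c ≤ j then f j else 0)
      = f c + ∑ j ∈ Finset.range b, (if c + 1 ≤ j then f j else 0) := by
  have := sum_if_head (b := b) (c := c) hc (fun _ => True) f trivial
  simpa using this

variable {H : Type} [AddCommGroup H] [Module ℚ H]

/-- prod of `Q` over a list of indices -/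
noncomputable def PPQ (Q : ℕ → Module.End ℚ H) (L : List ℕ) : Module.End ℚ H := (L.map Q).prod

lemma filB_cons (b c j : ℕ) (hcb : c < b) (hcj : c < j) :
    (List.range b).filter (fun x => decide (c ≤ x ∧ x < j))
      = c :: (List.range b).filter (fun x => decide (c + 1 ≤ x ∧ x < j)) := by
  rw [filter_range_cons (fun x => decide (c ≤ x ∧ x < j)) hcb (by simp; omega)
      (fun x hx => by simp; omega)]
  congr 1
  apply List.filter_congr
  intro x _
  rw [Bool.eq_iff_iff]
  simp only [Bool.and_eq_true, decide_eq_true_eq]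
  omega

lemma move (Q : ℕ → Module.End ℚ H) (D : ℕ → ℕ) (b : ℕ) (p : ℤ) :
    ∀ (k : ℕ) (B : Module.End ℚ H) (c : ℕ), b ≤ c + k →
    B * PPQ Q ((List.range b).filter (fun x => decide (c ≤ x ∧ x < b)))
      = ssgn (p * ∑ ℓ ∈ Finset.range b, (if c ≤ ℓ ∧ ℓ < b then (D ℓ : ℤ) else 0))
          • (PPQ Q ((List.range b).filter (fun x => decide (c ≤ x ∧ x < b))) * B)
        + ∑ j ∈ Finset.range b,
            (if c ≤ j then
              ssgn (p * ∑ ℓ ∈ Finset.range b, (if c ≤ ℓ ∧ ℓ < j then (D ℓ : ℤ) else 0))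
                • (PPQ Q ((List.range b).filter (fun x => decide (c ≤ x ∧ x < j)))
                    * sbr (ssgn (p * (D j : ℤ))) B (Q j)
                    * PPQ Q ((List.range b).filter (fun x => decide (j + 1 ≤ x ∧ x < b))))
             else 0) := by
  intro k
  induction k with
  | zero =>
      intro B c hbc
      simp only [Nat.add_zero] at hbc
      have hnil : (List.range b).filter (fun x => decide (c ≤ x ∧ x < b)) = [] :=
        filter_range_nil _ (fun x hx => by simp; omega)
      have hz : (∑ ℓ ∈ Finset.range b, (if c ≤ ℓ ∧ ℓ < b then (D ℓ : ℤ) else 0)) = 0 :=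
        Finset.sum_eq_zero (fun ℓ hℓ => by
          simp only [Finset.mem_range] at hℓ
          have : ¬ (c ≤ ℓ ∧ ℓ < b) := by omega
          simp [this])
      have hs : (∑ j ∈ Finset.range b,
          (if c ≤ j then
            ssgn (p * ∑ ℓ ∈ Finset.range b, (if c ≤ ℓ ∧ ℓ < j then (D ℓ : ℤ) else 0))
              • (PPQ Q ((List.range b).filter (fun x => decide (c ≤ x ∧ x < j)))
                  * sbr (ssgn (p * (D j : ℤ))) B (Q j)
                  * PPQ Q ((List.range b).filter (fun x => decide (j + 1 ≤ x ∧ x < b))))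
           else 0)) = 0 :=
        Finset.sum_eq_zero (fun j hj => by
          simp only [Finset.mem_range] at hj
          have : ¬ (c ≤ j) := by omega
          simp [this])
      rw [hnil, hz, hs]
      simp [PPQ, ssgn_zero]
  | succ k ih =>
      intro B c hbc
      rcases Nat.lt_or_ge c b with hcb | hcb
      swap
      · -- b ≤ c : same as base case
        have hnil : (List.range b).filter (fun x => decide (c ≤ x ∧ x < b)) = [] :=
          filter_range_nil _ (fun x hx => by simp; omega)
        have hz : (∑ ℓ ∈ Finset.range b, (if c ≤ ℓ ∧ ℓ < b then (D ℓ : ℤ) else 0)) = 0 :=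
          Finset.sum_eq_zero (fun ℓ hℓ => by
            simp only [Finset.mem_range] at hℓ
            have : ¬ (c ≤ ℓ ∧ ℓ < b) := by omega
            simp [this])
        have hs : (∑ j ∈ Finset.range b,
            (if c ≤ j then
              ssgn (p * ∑ ℓ ∈ Finset.range b, (if c ≤ ℓ ∧ ℓ < j then (D ℓ : ℤ) else 0))
                • (PPQ Q ((List.range b).filter (fun x => decide (c ≤ x ∧ x < j)))
                    * sbr (ssgn (p * (D j : ℤ))) B (Q j)
                    * PPQ Q ((List.range b).filter (fun x => decide (j + 1 ≤ x ∧ x < b))))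
             else 0)) = 0 :=
          Finset.sum_eq_zero (fun j hj => by
            simp only [Finset.mem_range] at hj
            have : ¬ (c ≤ j) := by omega
            simp [this])
        rw [hnil, hz, hs]
        simp [PPQ, ssgn_zero]
      · -- c < b
        have hcons := filB_cons b c b hcb hcb
        have hrest := ih B (c + 1) (by omega)
        -- LHS
        have hBQ : B * Q c = ssgn (p * (D c : ℤ)) • (Q c * B) + sbr (ssgn (p * (D c : ℤ))) B (Q c) := by
          rw [sbr]; abel
        calc B * PPQ Q ((List.range b).filter (fun x => decide (c ≤ x ∧ x < b)))
            = (B * Q c) * PPQ Q ((List.range b).filter (fun x => decide (c + 1 ≤ x ∧ x < b))) := by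
              rw [hcons]; simp only [PPQ, List.map_cons, List.prod_cons, mul_assoc]
          _ = ssgn (p * (D c : ℤ)) • (Q c * (B * PPQ Q ((List.range b).filter (fun x => decide (c + 1 ≤ x ∧ x < b)))))
              + sbr (ssgn (p * (D c : ℤ))) B (Q c)
                * PPQ Q ((List.range b).filter (fun x => decide (c + 1 ≤ x ∧ x < b))) := by
              rw [hBQ, add_mul, smul_mul_assoc, mul_assoc]
          _ = _ := by
              rw [hrest]
              have hsplit : ∀ j, c < j →
                  (∑ ℓ ∈ Finset.range b, (if c ≤ ℓ ∧ ℓ < j then (D ℓ : ℤ) else 0))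
                    = (D c : ℤ) + ∑ ℓ ∈ Finset.range b, (if c + 1 ≤ ℓ ∧ ℓ < j then (D ℓ : ℤ) else 0) :=
                fun j hj => sum_if_head hcb (fun ℓ => ℓ < j) _ hj
              rw [sum_if_head' hcb]
              have hTc : (List.range b).filter (fun x => decide (c ≤ x ∧ x < c)) = [] :=
                filter_range_nil _ (fun x hx => by simp)
              have hSDcc : (∑ ℓ ∈ Finset.range b, (if c ≤ ℓ ∧ ℓ < c then (D ℓ : ℤ) else 0)) = 0 :=
                Finset.sum_eq_zero (fun ℓ hℓ => by
                  have : ¬ (c ≤ ℓ ∧ ℓ < c) := by omega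
                  simp [this])
              rw [hTc, hSDcc, mul_zero, ssgn_zero, one_smul]
              rw [mul_add, smul_add]
              have htop : ssgn (p * (D c : ℤ)) • (Q c *
                    (ssgn (p * ∑ ℓ ∈ Finset.range b, (if c + 1 ≤ ℓ ∧ ℓ < b then (D ℓ : ℤ) else 0))
                      • (PPQ Q ((List.range b).filter (fun x => decide (c + 1 ≤ x ∧ x < b))) * B)))
                  = ssgn (p * ∑ ℓ ∈ Finset.range b, (if c ≤ ℓ ∧ ℓ < b then (D ℓ : ℤ) else 0))
                      • (PPQ Q ((List.range b).filter (fun x => decide (c ≤ x ∧ x < b))) * B) := by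
                rw [hcons]
                simp only [PPQ, List.map_cons, List.prod_cons]
                rw [hsplit b hcb, mul_add, ssgn_add, mul_smul_comm, smul_smul, mul_assoc]
              have hsum : ssgn (p * (D c : ℤ)) • (Q c *
                    (∑ j ∈ Finset.range b, (if c + 1 ≤ j then
                      ssgn (p * ∑ ℓ ∈ Finset.range b, (if c + 1 ≤ ℓ ∧ ℓ < j then (D ℓ : ℤ) else 0))
                        • (PPQ Q ((List.range b).filter (fun x => decide (c + 1 ≤ x ∧ x < j)))
                            * sbr (ssgn (p * (D j : ℤ))) B (Q j)
                            * PPQ Q ((List.range b).filter (fun x => decide (j + 1 ≤ x ∧ x < b))))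
                      else 0)))
                  = ∑ j ∈ Finset.range b, (if c + 1 ≤ j then
                      ssgn (p * ∑ ℓ ∈ Finset.range b, (if c ≤ ℓ ∧ ℓ < j then (D ℓ : ℤ) else 0))
                        • (PPQ Q ((List.range b).filter (fun x => decide (c ≤ x ∧ x < j)))
                            * sbr (ssgn (p * (D j : ℤ))) B (Q j)
                            * PPQ Q ((List.range b).filter (fun x => decide (j + 1 ≤ x ∧ x < b))))
                      else 0) := by
                rw [Finset.mul_sum, Finset.smul_sum]
                apply Finset.sum_congr rfl
                intro j hj
                by_cases hcj : c + 1 ≤ j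
                · rw [if_pos hcj, if_pos hcj]
                  rw [filB_cons b c j hcb (by omega)]
                  simp only [PPQ, List.map_cons, List.prod_cons]
                  rw [hsplit j (by omega), mul_add, ssgn_add, mul_smul_comm, smul_smul]
                  simp only [mul_assoc]
                · rw [if_neg hcj, if_neg hcj, mul_zero, smul_zero]
              rw [htop, hsum]
              abel

end L526
namespace L526
lemma strictMono_snoc_iff {n b : ℕ} (hn : 1 ≤ n) (σ : Fin n → Fin b) (j : Fin b) :
    StrictMono (Fin.snoc σ j : Fin (n + 1) → Fin b)
      ↔ StrictMono σ ∧ σ ⟨n - 1, by omega⟩ < j := by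
  constructor
  · intro h
    refine ⟨fun x y hxy => ?_, ?_⟩
    · have := h (Fin.castSucc_lt_castSucc_iff.mpr hxy)
      simpa [Fin.snoc_castSucc] using this
    · have h1 := h (Fin.castSucc_lt_last (⟨n - 1, by omega⟩ : Fin n))
      rwa [Fin.snoc_castSucc, Fin.snoc_last] at h1
  · rintro ⟨hσ, hlt⟩ x y hxy
    by_cases hy : y = Fin.last n
    · subst hy
      have hx : x ≠ Fin.last n := ne_of_lt hxy
      obtain ⟨x', rfl⟩ := Fin.exists_castSucc_eq.mpr hx
      rw [Fin.snoc_castSucc, Fin.snoc_last]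
      calc σ x' ≤ σ ⟨n - 1, by omega⟩ := by
            apply hσ.monotone
            rw [Fin.le_def]
            have hx' := x'.isLt
            simp only []
            omega
        _ < j := hlt
    · obtain ⟨y', rfl⟩ := Fin.exists_castSucc_eq.mpr hy
      have hx : x ≠ Fin.last n := ne_of_lt (lt_trans hxy (Fin.castSucc_lt_last y'))
      obtain ⟨x', rfl⟩ := Fin.exists_castSucc_eq.mpr hx
      rw [Fin.snoc_castSucc, Fin.snoc_castSucc]
      exact hσ (by rwa [Fin.castSucc_lt_castSucc_iff] at hxy)

lemma sum_snoc {M : Type} [AddCommMonoid M] {n b : ℕ} (hn : 1 ≤ n)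
    (F : (Fin (n + 1) → Fin b) → M) :
    ∑ σ' ∈ Finset.univ.filter (fun σ' : Fin (n + 1) → Fin b => StrictMono σ'), F σ'
      = ∑ σ ∈ Finset.univ.filter (fun σ : Fin n → Fin b => StrictMono σ),
          ∑ j : Fin b,
            (if (σ ⟨n - 1, by omega⟩ : ℕ) < (j : ℕ) then F (Fin.snoc σ j) else 0) := by
  symm
  calc ∑ σ ∈ Finset.univ.filter (fun σ : Fin n → Fin b => StrictMono σ),
          ∑ j : Fin b,
            (if (σ ⟨n - 1, by omega⟩ : ℕ) < (j : ℕ) then F (Fin.snoc σ j) else 0)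
      = ∑ σ : Fin n → Fin b, ∑ j : Fin b,
          (if StrictMono σ ∧ (σ ⟨n - 1, by omega⟩ : ℕ) < (j : ℕ) then F (Fin.snoc σ j) else 0) := by
        rw [Finset.sum_filter]
        apply Finset.sum_congr rfl
        intro σ _
        by_cases hσ : StrictMono σ
        · rw [if_pos hσ]
          apply Finset.sum_congr rfl
          intro j _
          simp [hσ]
        · rw [if_neg hσ]
          symm
          apply Finset.sum_eq_zero
          intro j _
          simp [hσ]
    _ = ∑ p : (Fin n → Fin b) × Fin b,
          (if StrictMono p.1 ∧ (p.1 ⟨n - 1, by omega⟩ : ℕ) < (p.2 : ℕ) then F (Fin.snoc p.1 p.2)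
           else 0) := by
        rw [← Finset.sum_product', Finset.univ_product_univ]
    _ = ∑ p ∈ Finset.univ.filter
          (fun p : (Fin n → Fin b) × Fin b =>
            StrictMono p.1 ∧ (p.1 ⟨n - 1, by omega⟩ : ℕ) < (p.2 : ℕ)),
          F (Fin.snoc p.1 p.2) := by
        rw [Finset.sum_filter]
    _ = ∑ σ' ∈ Finset.univ.filter (fun σ' : Fin (n + 1) → Fin b => StrictMono σ'), F σ' := by
        apply Finset.sum_nbij' (i := fun p : (Fin n → Fin b) × Fin b => Fin.snoc p.1 p.2)
          (j := fun σ' : Fin (n + 1) → Fin b => (fun t => σ' t.castSucc, σ' (Fin.last n)))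
        · intro p hp
          simp only [Finset.mem_filter, Finset.mem_univ, true_and] at hp ⊢
          exact (strictMono_snoc_iff hn p.1 p.2).mpr ⟨hp.1, Fin.lt_def.mpr hp.2⟩
        · intro σ' hσ'
          simp only [Finset.mem_filter, Finset.mem_univ, true_and] at hσ' ⊢
          refine ⟨fun x y hxy => ?_, ?_⟩
          · exact hσ' (Fin.castSucc_lt_castSucc_iff.mpr hxy)
          · exact hσ' (Fin.castSucc_lt_last _)
        · intro p hp
          refine Prod.ext ?_ ?_
          · funext t
            simp [Fin.snoc_castSucc]
          · simp [Fin.snoc_last]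
        · intro σ' _
          exact Fin.snoc_init_self σ'
        · intro p _
          rfl

end L526
namespace L526

lemma extFin_pos {i b : ℕ} (σ : Fin i → Fin b) {t : ℕ} (ht : t < i) :
    extFin σ t = ↑(σ ⟨t, ht⟩) := dif_pos ht

lemma extFin_snoc_lt {n b : ℕ} (σ : Fin n → Fin b) (j : Fin b) {t : ℕ} (ht : t < n) :
    extFin (Fin.snoc σ j) t = extFin σ t := by
  rw [extFin_pos _ (show t < n + 1 by omega), extFin_pos σ ht]
  congr 1
  have h : (⟨t, by omega⟩ : Fin (n + 1)) = Fin.castSucc ⟨t, ht⟩ := by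
    apply Fin.ext; simp
  rw [h, Fin.snoc_castSucc]

lemma extFin_snoc_last {n b : ℕ} (σ : Fin n → Fin b) (j : Fin b) :
    extFin (Fin.snoc σ j) n = ↑j := by
  rw [extFin_pos _ (show n < n + 1 by omega)]
  have h : (⟨n, by omega⟩ : Fin (n + 1)) = Fin.last n := by
    apply Fin.ext; simp
  rw [h, Fin.snoc_last]

noncomputable def T1 (S : HilbSetup) (b : ℕ) (s : ℤ) (dβ : ℕ → ℕ) (m : ℕ → ℤ) (β : ℕ → S.A)
    (g : Module.End ℚ S.H) (i : ℕ) (σ : Fin i → Fin b) : Module.End ℚ S.H :=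
  (((List.range b).filter fun l' => decide (∀ t, t < i → extFin σ t ≠ l')).map
      fun l' => S.q (m l') (β l')).prod *
    nestedL S.q s g ((List.range i).map fun t => (m (extFin σ t), β (extFin σ t), dβ (extFin σ t)))

noncomputable def T2 (S : HilbSetup) (b : ℕ) (s : ℤ) (dβ : ℕ → ℕ) (m : ℕ → ℤ) (β : ℕ → S.A)
    (g : Module.End ℚ S.H) (a : ℕ) (σ : Fin a → Fin b) : Module.End ℚ S.H :=
  (((List.range b).filter fun l' =>
        decide (l' < extFin σ (a - 1) ∧ ∀ t, t < a → extFin σ t ≠ l')).map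
      fun l' => S.q (m l') (β l')).prod *
    nestedL S.q s g ((List.range a).map fun t => (m (extFin σ t), β (extFin σ t), dβ (extFin σ t))) *
    (((List.range b).filter fun l' => decide (extFin σ (a - 1) < l')).map
      fun l' => S.q (m l') (β l')).prod

def Esig (b : ℕ) (s : ℤ) (dβ : ℕ → ℕ) (a : ℕ) (σ : Fin a → Fin b) : ℤ :=
  ∑ k ∈ Finset.range a,
    ((s + ∑ t ∈ Finset.range k, (dβ (extFin σ t) : ℤ)) *
      (∑ j ∈ Finset.range b,
        if (if k = 0 then (-1 : ℤ) else (extFin σ (k - 1) : ℤ)) < (j : ℤ) ∧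
            (j : ℤ) < (extFin σ k : ℤ) then (dβ j : ℤ) else 0))

def Eexp (b : ℕ) (s : ℤ) (dβ : ℕ → ℕ) (i : ℕ) (σ : Fin i → Fin b) : ℤ :=
  Esig b s dβ i σ
    + (s + ∑ t ∈ Finset.range i, (dβ (extFin σ t) : ℤ)) *
        (∑ ℓ ∈ Finset.range b, if extFin σ (i - 1) + 1 ≤ ℓ ∧ ℓ < b then (dβ ℓ : ℤ) else 0)

noncomputable def S2 (S : HilbSetup) (b : ℕ) (s : ℤ) (dβ : ℕ → ℕ) (m : ℕ → ℤ) (β : ℕ → S.A)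
    (g : Module.End ℚ S.H) (a : ℕ) : Module.End ℚ S.H :=
  ∑ σ ∈ Finset.univ.filter (fun σ : Fin a → Fin b => StrictMono σ),
    ssgn (Esig b s dβ a σ) • T2 S b s dβ m β g a σ

lemma base_core (S : HilbSetup) (b : ℕ) (s : ℤ) (dβ : ℕ → ℕ) (m : ℕ → ℤ) (β : ℕ → S.A)
    (g : Module.End ℚ S.H) :
    g * ((List.range b).map fun j => S.q (m j) (β j)).prod
      = ssgn (s * ∑ ℓ ∈ Finset.range b, (if 0 ≤ ℓ ∧ ℓ < b then (dβ ℓ : ℤ) else 0))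
          • (((List.range b).map fun j => S.q (m j) (β j)).prod * g)
        + S2 S b s dβ m β g 1 := by
  have hfull : (List.range b).filter (fun x => decide (0 ≤ x ∧ x < b)) = List.range b :=
    List.filter_eq_self.mpr (by intro x hx; simp only [List.mem_range] at hx; simp [hx])
  have hmove := move (fun l' => S.q (m l') (β l')) dβ b s b g 0 (by omega)
  simp only [PPQ] at hmove
  rw [hfull] at hmove
  rw [hmove]
  congr 1
  have hSM : ∀ σ : Fin 1 → Fin b, StrictMono σ := by
    intro σ x y hxy
    exact absurd hxy (by rw [Subsingleton.elim x y]; exact lt_irrefl y)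
  rw [S2, Finset.filter_true_of_mem (fun σ _ => hSM σ)]
  rw [← (Equiv.funUnique (Fin 1) (Fin b)).symm.sum_comp
    (fun σ => ssgn (Esig b s dβ 1 σ) • T2 S b s dβ m β g 1 σ)]
  rw [← Fin.sum_univ_eq_sum_range (fun j =>
    if 0 ≤ j then
      ssgn (s * ∑ ℓ ∈ Finset.range b, (if 0 ≤ ℓ ∧ ℓ < j then (dβ ℓ : ℤ) else 0))
        • ((((List.range b).filter (fun x => decide (0 ≤ x ∧ x < j))).map
              (fun l' => S.q (m l') (β l'))).prod
            * sbr (ssgn (s * (dβ j : ℤ))) g (S.q (m j) (β j))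
            * (((List.range b).filter (fun x => decide (j + 1 ≤ x ∧ x < b))).map
                (fun l' => S.q (m l') (β l'))).prod)
    else 0) b]
  apply Finset.sum_congr rfl
  intro j _
  rw [if_pos (Nat.zero_le _)]
  have hext : extFin (fun _ : Fin 1 => j) 0 = (j : ℕ) := extFin_pos _ (by omega)
  have hE : Esig b s dβ 1 (fun _ : Fin 1 => j)
      = s * ∑ ℓ ∈ Finset.range b, (if 0 ≤ ℓ ∧ ℓ < (j : ℕ) then (dβ ℓ : ℤ) else 0) := by
    rw [Esig, Finset.sum_range_one, Finset.sum_range_zero, add_zero]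
    congr 1
    apply Finset.sum_congr rfl
    intro ℓ hℓ
    rw [if_pos (rfl : (0 : ℕ) = 0), hext]
    apply if_congr _ rfl rfl
    omega
  have hR : (List.range b).filter (fun l' =>
        decide (extFin (fun _ : Fin 1 => j) (1 - 1) < l'))
      = (List.range b).filter (fun x => decide ((j : ℕ) + 1 ≤ x ∧ x < b)) := by
    apply List.filter_congr
    intro x hx
    rw [Bool.eq_iff_iff]
    simp only [decide_eq_true_eq, List.mem_range] at hx ⊢
    rw [hext]
    omega
  have hN : nestedL S.q s g ((List.range 1).map fun t =>
        (m (extFin (fun _ : Fin 1 => j) t), β (extFin (fun _ : Fin 1 => j) t),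
          dβ (extFin (fun _ : Fin 1 => j) t)))
      = sbr (ssgn (s * (dβ (j : ℕ) : ℤ))) g (S.q (m (j : ℕ)) (β (j : ℕ))) := by
    have h1 : List.range 1 = [0] := rfl
    rw [h1]
    simp only [List.map_cons, List.map_nil, hext]
    simp [nestedL]
  show _ = ssgn (Esig b s dβ 1 (fun _ : Fin 1 => j)) • T2 S b s dβ m β g 1 (fun _ : Fin 1 => j)
  rw [T2, hE, hN, hR]
  congr 3
  congr 1
  congr 1
  apply List.filter_congr
  intro x hx
  rw [Bool.eq_iff_iff]
  simp only [decide_eq_true_eq, List.mem_range] at hx ⊢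
  have hext' : extFin (fun _ : Fin 1 => j) (1 - 1) = (j : ℕ) := hext
  rw [hext']
  constructor
  · rintro ⟨-, h1⟩
    refine ⟨h1, ?_⟩
    intro t ht
    have ht0 : t = 0 := by omega
    subst ht0
    rw [hext]
    omega
  · rintro ⟨h1, -⟩
    exact ⟨Nat.zero_le _, h1⟩

end L526
namespace L526

lemma smul_rearrange {H : Type} [AddCommGroup H] [Module ℚ H] (e1 e2 : ℤ)
    (L R B : Module.End ℚ H) :
    ssgn e1 • (L * (ssgn e2 • (R * B))) = ssgn (e1 + e2) • (L * (R * B)) := by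
  rw [mul_smul_comm, smul_smul, ← ssgn_add]

lemma step_core (S : HilbSetup) (b : ℕ) (s : ℤ) (dβ : ℕ → ℕ) (m : ℕ → ℤ) (β : ℕ → S.A)
    (g : Module.End ℚ S.H) (n : ℕ) (hn1 : 1 ≤ n) :
    S2 S b s dβ m β g n
      = (∑ σ ∈ Finset.univ.filter (fun σ : Fin n → Fin b => StrictMono σ),
          ssgn (Eexp b s dβ n σ) • T1 S b s dβ m β g n σ)
        + S2 S b s dβ m β g (n + 1) := by
  have hsplit2 : S2 S b s dβ m β g (n + 1)
      = ∑ σ ∈ Finset.univ.filter (fun σ : Fin n → Fin b => StrictMono σ),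
          ∑ j : Fin b,
            (if (σ ⟨n - 1, by omega⟩ : ℕ) < (j : ℕ) then
              ssgn (Esig b s dβ (n + 1) (Fin.snoc σ j)) •
                T2 S b s dβ m β g (n + 1) (Fin.snoc σ j)
             else 0) := by
    rw [S2]
    exact sum_snoc hn1 _
  rw [hsplit2, ← Finset.sum_add_distrib, S2]
  apply Finset.sum_congr rfl
  intro σ hσmem
  have hσ : StrictMono σ := by
    have := (Finset.mem_filter.mp hσmem).2
    exact this
  have hext : extFin σ (n - 1) = ((σ ⟨n - 1, by omega⟩ : Fin b) : ℕ) := extFin_pos σ (by omega)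
  set c : ℕ := ((σ ⟨n - 1, by omega⟩ : Fin b) : ℕ) with hcdef
  have hcb : c < b := (σ ⟨n - 1, by omega⟩).isLt
  have hmax : ∀ t, t < n → extFin σ t ≤ c := by
    intro t ht
    rw [extFin_pos σ ht]
    exact Fin.le_def.mp (hσ.monotone (by rw [Fin.mk_le_mk]; omega))
  set p : ℤ := s + ∑ t ∈ Finset.range n, (dβ (extFin σ t) : ℤ) with hpdef
  set B : Module.End ℚ S.H :=
    nestedL S.q s g ((List.range n).map fun t =>
      (m (extFin σ t), β (extFin σ t), dβ (extFin σ t))) with hBdef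
  -- rewrite the right-hand product of T2 and apply `move`
  have hRconv : (List.range b).filter (fun l' => decide (extFin σ (n - 1) < l'))
      = (List.range b).filter (fun x => decide (c + 1 ≤ x ∧ x < b)) := by
    apply List.filter_congr
    intro x hx
    rw [Bool.eq_iff_iff]
    simp only [decide_eq_true_eq, List.mem_range] at hx ⊢
    rw [hext]
    omega
  have hmove := move (fun l' => S.q (m l') (β l')) dβ b p b B (c + 1) (by omega)
  simp only [PPQ] at hmove
  rw [T2, hRconv, mul_assoc, hmove, mul_add, smul_add]
  congr 1
  · -- part A : the fully-moved term
    rw [smul_rearrange]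
    have hsplit0 : (List.range b).filter
          (fun l' => decide (∀ t, t < n → extFin σ t ≠ l'))
        = ((List.range b).filter
            (fun l' => decide (l' < extFin σ (n - 1) ∧ ∀ t, t < n → extFin σ t ≠ l')))
          ++ ((List.range b).filter (fun x => decide (c + 1 ≤ x ∧ x < b))) := by
      rw [filter_range_split b (c + 1) (fun l' => decide (∀ t, t < n → extFin σ t ≠ l'))]
      congr 1
      · apply List.filter_congr
        intro x hx
        rw [Bool.eq_iff_iff]
        simp only [Bool.and_eq_true, decide_eq_true_eq, List.mem_range] at hx ⊢
        rw [hext]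
        constructor
        · rintro ⟨h1, h2⟩
          have hne := h1 (n - 1) (by omega)
          rw [hext] at hne
          exact ⟨by omega, h1⟩
        · rintro ⟨h1, h2⟩
          exact ⟨h2, by omega⟩
      · apply List.filter_congr
        intro x hx
        rw [Bool.eq_iff_iff]
        simp only [Bool.and_eq_true, decide_eq_true_eq, List.mem_range] at hx ⊢
        constructor
        · rintro ⟨-, h2⟩
          exact ⟨h2, hx⟩
        · rintro ⟨h2, -⟩
          refine ⟨?_, h2⟩
          intro t ht
          have := hmax t ht
          omega
    rw [T1, hsplit0, List.map_append, List.prod_append, Eexp, hext, mul_assoc]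
  · -- part B : the bracket terms
    rw [Finset.mul_sum, Finset.smul_sum]
    rw [← Fin.sum_univ_eq_sum_range]
    apply Finset.sum_congr rfl
    intro j _
    by_cases hcj : c + 1 ≤ (j : ℕ)
    swap
    · rw [if_neg hcj, if_neg (by omega), mul_zero, smul_zero]
    rw [if_pos hcj, if_pos (show c < (j : ℕ) by omega)]
    have hsnlt : ∀ t, t < n → extFin (Fin.snoc σ j) t = extFin σ t :=
      fun t ht => extFin_snoc_lt σ j ht
    have hsnlast : extFin (Fin.snoc σ j) n = (j : ℕ) := extFin_snoc_last σ j
    -- the sign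
    have hEs : Esig b s dβ (n + 1) (Fin.snoc σ j)
        = Esig b s dβ n σ
          + p * ∑ ℓ ∈ Finset.range b, (if c + 1 ≤ ℓ ∧ ℓ < (j : ℕ) then (dβ ℓ : ℤ) else 0) := by
      rw [Esig, Finset.sum_range_succ]
      congr 1
      · rw [Esig]
        apply Finset.sum_congr rfl
        intro k hk
        rw [Finset.mem_range] at hk
        have e1 : extFin (Fin.snoc σ j) k = extFin σ k := hsnlt k hk
        have e2 : (if k = 0 then (-1 : ℤ) else (extFin (Fin.snoc σ j) (k - 1) : ℤ))
            = (if k = 0 then (-1 : ℤ) else (extFin σ (k - 1) : ℤ)) := by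
          by_cases hk0 : k = 0
          · simp [hk0]
          · rw [if_neg hk0, if_neg hk0, hsnlt (k - 1) (by omega)]
        have e3 : (∑ t ∈ Finset.range k, (dβ (extFin (Fin.snoc σ j) t) : ℤ))
            = ∑ t ∈ Finset.range k, (dβ (extFin σ t) : ℤ) :=
          Finset.sum_congr rfl (fun t ht => by
            rw [Finset.mem_range] at ht
            rw [hsnlt t (by omega)])
        rw [e1, e2, e3]
      · have e3 : (∑ t ∈ Finset.range n, (dβ (extFin (Fin.snoc σ j) t) : ℤ))
            = ∑ t ∈ Finset.range n, (dβ (extFin σ t) : ℤ) :=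
          Finset.sum_congr rfl (fun t ht => by
            rw [Finset.mem_range] at ht
            rw [hsnlt t ht])
        rw [if_neg (by omega : ¬ n = 0), hsnlt (n - 1) (by omega), hsnlast, hext, e3, hpdef]
        congr 1
        apply Finset.sum_congr rfl
        intro ℓ hℓ
        apply if_congr _ rfl rfl
        omega
    -- the operator part
    have hT2s : T2 S b s dβ m β g (n + 1) (Fin.snoc σ j)
        = (((List.range b).filter
              (fun l' => decide (l' < extFin σ (n - 1) ∧ ∀ t, t < n → extFin σ t ≠ l'))).map
            (fun l' => S.q (m l') (β l'))).prod
          * ((((List.range b).filter (fun x => decide (c + 1 ≤ x ∧ x < (j : ℕ)))).map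
              (fun l' => S.q (m l') (β l'))).prod
            * (sbr (ssgn (p * (dβ (j : ℕ) : ℤ))) B (S.q (m (j : ℕ)) (β (j : ℕ)))
              * (((List.range b).filter (fun x => decide ((j : ℕ) + 1 ≤ x ∧ x < b))).map
                  (fun l' => S.q (m l') (β l'))).prod)) := by
      rw [T2]
      have hd1 : n + 1 - 1 = n := rfl
      rw [hd1]
      -- left filter splits
      have hLs : (List.range b).filter
            (fun l' => decide (l' < extFin (Fin.snoc σ j) n ∧
              ∀ t, t < n + 1 → extFin (Fin.snoc σ j) t ≠ l'))
          = ((List.range b).filter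
              (fun l' => decide (l' < extFin σ (n - 1) ∧ ∀ t, t < n → extFin σ t ≠ l')))
            ++ ((List.range b).filter (fun x => decide (c + 1 ≤ x ∧ x < (j : ℕ)))) := by
        rw [filter_range_split b (c + 1)
          (fun l' => decide (l' < extFin (Fin.snoc σ j) n ∧
            ∀ t, t < n + 1 → extFin (Fin.snoc σ j) t ≠ l'))]
        congr 1
        · apply List.filter_congr
          intro x hx
          rw [Bool.eq_iff_iff]
          simp only [Bool.and_eq_true, decide_eq_true_eq, List.mem_range] at hx ⊢
          rw [hext, hsnlast]
          constructor
          · rintro ⟨⟨h1, h2⟩, h3⟩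
            have hne := h2 (n - 1) (by omega)
            rw [hsnlt (n - 1) (by omega), hext] at hne
            refine ⟨by omega, ?_⟩
            intro t ht
            have := h2 t (by omega)
            rwa [hsnlt t ht] at this
          · rintro ⟨h1, h2⟩
            refine ⟨⟨by omega, ?_⟩, by omega⟩
            intro t ht
            by_cases htn : t < n
            · rw [hsnlt t htn]
              exact h2 t htn
            · have htn' : t = n := by omega
              subst htn'
              rw [hsnlast]
              omega
        · apply List.filter_congr
          intro x hx
          rw [Bool.eq_iff_iff]
          simp only [Bool.and_eq_true, decide_eq_true_eq, List.mem_range] at hx ⊢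
          rw [hsnlast]
          constructor
          · rintro ⟨⟨h1, -⟩, h3⟩
            exact ⟨h3, h1⟩
          · rintro ⟨h1, h2⟩
            refine ⟨⟨h2, ?_⟩, h1⟩
            intro t ht
            by_cases htn : t < n
            · rw [hsnlt t htn]
              have := hmax t htn
              omega
            · have htn' : t = n := by omega
              subst htn'
              rw [hsnlast]
              omega
      -- nested bracket extends
      have hNs : nestedL S.q s g ((List.range (n + 1)).map fun t =>
            (m (extFin (Fin.snoc σ j) t), β (extFin (Fin.snoc σ j) t),
              dβ (extFin (Fin.snoc σ j) t)))
          = sbr (ssgn (p * (dβ (j : ℕ) : ℤ))) B (S.q (m (j : ℕ)) (β (j : ℕ))) := by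
        rw [List.range_succ, List.map_append]
        have hmapc : (List.range n).map (fun t =>
              (m (extFin (Fin.snoc σ j) t), β (extFin (Fin.snoc σ j) t),
                dβ (extFin (Fin.snoc σ j) t)))
            = (List.range n).map (fun t =>
              (m (extFin σ t), β (extFin σ t), dβ (extFin σ t))) := by
          apply List.map_congr_left
          intro t ht
          rw [List.mem_range] at ht
          rw [hsnlt t ht]
        rw [hmapc, List.map_singleton, hsnlast]
        rw [nestedL_snoc]
        have hps : s + sumd ((List.range n).map fun t =>
              (m (extFin σ t), β (extFin σ t), dβ (extFin σ t))) = p := by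
          rw [hpdef]
          congr 1
          simp only [sumd, List.map_map]
          exact listsum_eq (fun t => (dβ (extFin σ t) : ℤ)) n
        rw [hps, ← hBdef]
      -- right filter
      have hRs : (List.range b).filter (fun l' => decide (extFin (Fin.snoc σ j) n < l'))
          = (List.range b).filter (fun x => decide ((j : ℕ) + 1 ≤ x ∧ x < b)) := by
        apply List.filter_congr
        intro x hx
        rw [Bool.eq_iff_iff]
        simp only [decide_eq_true_eq, List.mem_range] at hx ⊢
        rw [hsnlast]
        omega
      rw [hLs, hNs, hRs, List.map_append, List.prod_append]
      simp only [mul_assoc]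
    rw [smul_rearrange, hEs, hT2s]
    simp only [mul_assoc]

end L526
namespace L526

lemma main (S : HilbSetup) (b : ℕ) (s : ℤ) (dβ : ℕ → ℕ) :
    ∀ a : ℕ, 1 ≤ a → a ≤ b →
    ∃ ε : (i : ℕ) → (Fin i → Fin b) → ℚ,
      (∀ (i : ℕ) (σ : Fin i → Fin b), ε i σ = 1 ∨ ε i σ = -1) ∧
      ∀ (g : Module.End ℚ S.H) (m : ℕ → ℤ) (β : ℕ → S.A),
        g * ((List.range b).map fun j => S.q (m j) (β j)).prod
          = (∑ i ∈ Finset.range a,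
              ∑ σ ∈ Finset.univ.filter (fun σ : Fin i → Fin b => StrictMono σ),
                ε i σ • T1 S b s dβ m β g i σ)
            + S2 S b s dβ m β g a := by
  intro a
  induction a with
  | zero => intro h _; exact absurd h (by omega)
  | succ n ih =>
    intro _ hsb
    by_cases hn0 : n = 0
    · subst hn0
      refine ⟨fun i σ => if i = 0 then
          ssgn (s * ∑ ℓ ∈ Finset.range b, (if 0 ≤ ℓ ∧ ℓ < b then (dβ ℓ : ℤ) else 0))
        else 1, ?_, ?_⟩
      · intro i σ
        dsimp only
        by_cases hi : i = 0
        · rw [if_pos hi]; exact ssgn_pm _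
        · rw [if_neg hi]; left; rfl
      · intro g m β
        rw [base_core S b s dβ m β g]
        congr 1
        rw [Finset.sum_range_one]
        have hSM0 : ∀ σ : Fin 0 → Fin b, StrictMono σ := fun σ x => x.elim0
        rw [Finset.filter_true_of_mem (fun σ _ => hSM0 σ)]
        rw [Finset.univ_unique, Finset.sum_singleton]
        dsimp only
        rw [if_pos rfl]
        congr 1
        rw [T1]
        have h3 : nestedL S.q s g ((List.range 0).map fun t =>
            (m (extFin (default : Fin 0 → Fin b) t), β (extFin (default : Fin 0 → Fin b) t),
              dβ (extFin (default : Fin 0 → Fin b) t))) = g := by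
          rw [List.range_zero, List.map_nil]
          rfl
        rw [h3]
        congr 3
        symm
        apply List.filter_eq_self.mpr
        intro x hx
        simp only [decide_eq_true_eq]
        intro t ht
        exact absurd ht (by omega)
    · obtain ⟨ε, hpm, hmain⟩ := ih (by omega) (by omega)
      refine ⟨fun i σ => if i < n then ε i σ else ssgn (Eexp b s dβ i σ), ?_, ?_⟩
      · intro i σ
        dsimp only
        by_cases h : i < n
        · rw [if_pos h]; exact hpm i σ
        · rw [if_neg h]; exact ssgn_pm _
      · intro g m β
        rw [hmain g m β, step_core S b s dβ m β g n (by omega)]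
        rw [Finset.sum_range_succ, ← add_assoc]
        congr 1
        congr 1
        · apply Finset.sum_congr rfl
          intro i hi
          apply Finset.sum_congr rfl
          intro σ _
          rw [Finset.mem_range] at hi
          dsimp only
          rw [if_pos hi]
        · apply Finset.sum_congr rfl
          intro σ _
          dsimp only
          rw [if_neg (lt_irrefl n)]

end L526

/-- **Lemma 5.26.** Fix `1 ≤ a ≤ b`, let `g ∈ End(H)` be homogeneous of bidegree
`(l, s)`, let `m₁, …, m_b ∈ ℤ`, `β₁, …, β_b ∈ A` homogeneous of degrees `dβ`, and let
`w ∈ H`. There exist signs `ε(σᵢ) ∈ {±1}` (depending only on `s`, the degrees `|β_j|`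
and `σᵢ`) such that `g(q_{m₁}(β₁)⋯q_{m_b}(β_b) w)` is the sum of the two terms (5.27)
and (5.28): a sum over strictly increasing maps `σᵢ : {1,…,i} → {1,…,b}` (`0 ≤ i < a`) of
`±(∏_{ℓ∈σᵢ⁰} q_{m_ℓ}(β_ℓ))·[⋯[g, q_{m_{σᵢ(1)}}(β_{σᵢ(1)})],…, q_{m_{σᵢ(i)}}(β_{σᵢ(i)})] w`,
plus a sum over strictly increasing `σ_a : {1,…,a} → {1,…,b}` of the explicitly signed
terms `(∏_{ℓ∈σ_a¹} q_{m_ℓ}(β_ℓ))·[⋯[g, q_{m_{σ_a(1)}}(β_{σ_a(1)})],…]·(∏_{ℓ∈σ_a²} q_{m_ℓ}(β_ℓ)) w`.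
(Indices are 0-based here; `σ_a(0) := 0` of the paper becomes the lower bound `-1`.) -/
theorem lemma_5_26 (S : HilbSetup) (a b : ℕ) (ha : 1 ≤ a) (hab : a ≤ b)
    (l s : ℤ) (dβ : ℕ → ℕ) :
    ∃ ε : (i : ℕ) → (Fin i → Fin b) → ℚ,
      (∀ (i : ℕ) (σ : Fin i → Fin b), ε i σ = 1 ∨ ε i σ = -1) ∧
      ∀ (g : Module.End ℚ S.H),
        (∀ (N j : ℤ) (x : S.H), x ∈ S.comp N j → g x ∈ S.comp (N + l) (j + s)) →
        ∀ (m : ℕ → ℤ) (β : ℕ → S.A), (∀ j, j < b → β j ∈ S.degA (dβ j)) →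
        ∀ w : S.H,
        g ((((List.range b).map fun j => S.q (m j) (β j)).prod) w)
          = (∑ i ∈ Finset.range a,
              ∑ σ ∈ Finset.univ.filter (fun σ : Fin i → Fin b => StrictMono σ),
                ε i σ •
                  (((((List.range b).filter fun l' =>
                          decide (∀ t, t < i → extFin σ t ≠ l')).map
                        fun l' => S.q (m l') (β l')).prod *
                    nestedL S.q s g
                      ((List.range i).map fun t =>
                        (m (extFin σ t), β (extFin σ t), dβ (extFin σ t)))) w))
            + ∑ σ ∈ Finset.univ.filter (fun σ : Fin a → Fin b => StrictMono σ),
                ssgn (∑ k ∈ Finset.range a,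
                    ((s + ∑ t ∈ Finset.range k, (dβ (extFin σ t) : ℤ)) *
                      (∑ j ∈ Finset.range b,
                        if (if k = 0 then (-1 : ℤ) else (extFin σ (k - 1) : ℤ)) < (j : ℤ) ∧
                            (j : ℤ) < (extFin σ k : ℤ) then (dβ j : ℤ) else 0))) •
                  (((((List.range b).filter fun l' =>
                          decide (l' < extFin σ (a - 1) ∧ ∀ t, t < a → extFin σ t ≠ l')).map
                        fun l' => S.q (m l') (β l')).prod *
                    nestedL S.q s g
                      ((List.range a).map fun t =>
                        (m (extFin σ t), β (extFin σ t), dβ (extFin σ t))) *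
                    (((List.range b).filter fun l' => decide (extFin σ (a - 1) < l')).map
                        fun l' => S.q (m l') (β l')).prod) w) := by
  obtain ⟨ε, hpm, hmain⟩ := L526.main S b s dβ a ha hab
  refine ⟨ε, hpm, ?_⟩
  intro g _ m β _ w
  calc g ((((List.range b).map fun j => S.q (m j) (β j)).prod) w)
      = (g * (((List.range b).map fun j => S.q (m j) (β j)).prod)) w := rfl
    _ = _ := by
        rw [hmain g m β]
        simp only [L526.T1, L526.S2, L526.T2, L526.Esig, LinearMap.add_apply,
          LinearMap.sum_apply, LinearMap.smul_apply]
end
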